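/- Let 𝔻 be a relative entropy. Then for all n ∈ ℕ and all p, q, t ∈ P(n): 𝔻(p‖q) ≤ 𝔻(p‖t) + D_max(t‖q), where D_max(t‖q) = log max_{i∈[n]} t_i/q_i (with the conventions 0/0 = 0 and x/0 = +∞ for x > 0). -/

import Mathlib

open scoped BigOperators ENNReal

/-- A probability vector: nonnegative entries summing to 1. -/
def IsProbVec {n : ℕ} (p : Fin n → ℝ) : Prop :=
  (∀ i, 0 ≤ p i) ∧ ∑ i, p i = 1

/-- The uniform probability vector on `n` outcomes. -/
noncomputable def uniform (n : ℕ) : Fin n → ℝ := fun _ => (n : ℝ)⁻¹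

/-- Kronecker (tensor) product of two vectors. -/
noncomputable def kron {n m : ℕ} (p : Fin n → ℝ) (q : Fin m → ℝ) : Fin (n * m) → ℝ :=
  fun i => p (finProdFinEquiv.symm i).1 * q (finProdFinEquiv.symm i).2

/-- Sum of the `k` largest entries (for vectors with nonnegative entries):
the supremum of sums over subsets of at most `k` indices. -/
noncomputable def maxPartialSum {n : ℕ} (p : Fin n → ℝ) (k : ℕ) : ℝ :=
  sSup { x | ∃ s : Finset (Fin n), s.card ≤ k ∧ ∑ i ∈ s, p i = x }

/-- `p` majorises `q`: every partial sum of the `k` largest entries of `p`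
dominates that of `q` (entries beyond a vector's length count as 0). -/
def Majorizes {n m : ℕ} (p : Fin n → ℝ) (q : Fin m → ℝ) : Prop :=
  ∀ k : ℕ, maxPartialSum q k ≤ maxPartialSum p k

/-- A channel: an `n × m` row-stochastic matrix. -/
def IsStochastic {n m : ℕ} (W : Matrix (Fin n) (Fin m) ℝ) : Prop :=
  (∀ i j, 0 ≤ W i j) ∧ ∀ i, ∑ j, W i j = 1

/-- Relative majorisation of pairs: some channel maps `(p, q)` to `(p', q')`. -/
def RelMaj {n m : ℕ} (p q : Fin n → ℝ) (p' q' : Fin m → ℝ) : Prop :=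
  ∃ W : Matrix (Fin n) (Fin m) ℝ, IsStochastic W ∧
    Matrix.vecMul p W = p' ∧ Matrix.vecMul q W = q'

/-- An entropy: a `[0,∞)`-valued function on probability vectors of all finite dimensions
that is monotone under mixing (majorisation), additive for Kronecker products,
and normalised so that `H(u₂) = log 2` (binary logarithm). -/
structure IsEntropy (H : (n : ℕ) → (Fin n → ℝ) → ℝ) : Prop where
  nonneg : ∀ {n : ℕ} (p : Fin n → ℝ), IsProbVec p → 0 ≤ H n p
  mono : ∀ {n m : ℕ} (p : Fin n → ℝ) (p' : Fin m → ℝ),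
    IsProbVec p → IsProbVec p' → Majorizes p p' → H n p ≤ H m p'
  additive : ∀ {n m : ℕ} (p : Fin n → ℝ) (q : Fin m → ℝ),
    IsProbVec p → IsProbVec q → H (n * m) (kron p q) = H n p + H m q
  normalized : H 2 (uniform 2) = Real.logb 2 2

/-- A monotone divergence: a `[0,∞]`-valued function on pairs of probability vectors of
equal finite dimension satisfying the data-processing inequality and `𝔻(1‖1) = 0`. -/
structure IsMonotoneDivergence (D : (n : ℕ) → (Fin n → ℝ) → (Fin n → ℝ) → ℝ≥0∞) : Prop where
  dpi : ∀ {n m : ℕ} (p q : Fin n → ℝ) (p' q' : Fin m → ℝ),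
    IsProbVec p → IsProbVec q → IsProbVec p' → IsProbVec q' →
    RelMaj p q p' q' → D m p' q' ≤ D n p q
  normalized : D 1 (fun _ => 1) (fun _ => 1) = 0

/-- A relative entropy: data-processing inequality, additivity for Kronecker products,
and the normalisation `𝔻(e₁‖u₂) = log 2` (binary logarithm). -/
structure IsRelativeEntropy (D : (n : ℕ) → (Fin n → ℝ) → (Fin n → ℝ) → ℝ≥0∞) : Prop where
  dpi : ∀ {n m : ℕ} (p q : Fin n → ℝ) (p' q' : Fin m → ℝ),
    IsProbVec p → IsProbVec q → IsProbVec p' → IsProbVec q' →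
    RelMaj p q p' q' → D m p' q' ≤ D n p q
  additive : ∀ {n m : ℕ} (p₁ q₁ : Fin n → ℝ) (p₂ q₂ : Fin m → ℝ),
    IsProbVec p₁ → IsProbVec q₁ → IsProbVec p₂ → IsProbVec q₂ →
    D (n * m) (kron p₁ p₂) (kron q₁ q₂) = D n p₁ q₁ + D m p₂ q₂
  normalized : D 2 ![1, 0] ![1/2, 1/2] = ENNReal.ofReal (Real.logb 2 2)

/-- The max-relative entropy `D_max(t‖q) = log max_i t_i/q_i`
(binary logarithm, with the conventions `0/0 = 0` and `x/0 = ∞` for `x > 0`). -/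
noncomputable def DmaxR {n : ℕ} (t q : Fin n → ℝ) : ℝ≥0∞ :=
  if (⨆ i, ENNReal.ofReal (t i) / ENNReal.ofReal (q i)) = ⊤ then ⊤
  else ENNReal.ofReal
    (Real.logb 2 (⨆ i, ENNReal.ofReal (t i) / ENNReal.ofReal (q i)).toReal)

/-!
Write `f ν = bernoulliDiv D ν = 𝔻(e₁ ‖ (ν, 1 - ν))`. A channel maps `(e₁, (ν, 1 - ν))` to any
pair `(p', q')` with `ν p' ≤ q'`, and coarse-graining to a single outcome goes back, so
additivity gives `f (ν₁ ν₂) = f ν₁ + f ν₂`; together with monotonicity and `f (1/2) = 1` this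
yields `f ν ≤ log ν⁻¹`. If `M = max tᵢ/qᵢ` is finite and `ν = M⁻¹`, then `q = ν t + (1 - ν) w`
for a probability vector `w`, so the channel `(a, 0) ↦ δₐ`, `(a, 1) ↦ w` maps
`(p ⊗ e₁, t ⊗ (ν, 1 - ν))` to `(p, q)`, whence `𝔻(p‖q) ≤ 𝔻(p‖t) + f ν ≤ 𝔻(p‖t) + log M`.
-/

open Finset Matrix

lemma kron_finProdFinEquiv {n m : ℕ} (p : Fin n → ℝ) (q : Fin m → ℝ) (a : Fin n) (b : Fin m) :
    kron p q (finProdFinEquiv (a, b)) = p a * q b := by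
  simp [kron]

lemma sum_kron {n m : ℕ} (p : Fin n → ℝ) (q : Fin m → ℝ) :
    ∑ i, kron p q i = (∑ i, p i) * ∑ j, q j := by
  rw [← finProdFinEquiv.sum_comp, Fintype.sum_prod_type, sum_mul_sum]
  simp [kron_finProdFinEquiv]

lemma vecMul_kron_apply {n m k : ℕ} (p : Fin n → ℝ) (q : Fin m → ℝ)
    (W : Matrix (Fin (n * m)) (Fin k) ℝ) (j : Fin k) :
    (kron p q ᵥ* W) j = ∑ a, ∑ b, p a * q b * W (finProdFinEquiv (a, b)) j := by
  simp only [vecMul, dotProduct]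
  rw [← finProdFinEquiv.sum_comp, Fintype.sum_prod_type]
  simp [kron_finProdFinEquiv]

lemma smul_kron_le_kron {n m : ℕ} {p q : Fin n → ℝ} {p' q' : Fin m → ℝ} {a b : ℝ}
    (hp : ∀ i, 0 ≤ p i) (hp' : ∀ i, 0 ≤ p' i) (ha : 0 ≤ a) (hb : 0 ≤ b)
    (h : ∀ i, a * p i ≤ q i) (h' : ∀ i, b * p' i ≤ q' i) (i : Fin (n * m)) :
    a * b * kron p p' i ≤ kron q q' i := by
  obtain ⟨⟨i, i'⟩, rfl⟩ := finProdFinEquiv.surjective i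
  rw [kron_finProdFinEquiv, kron_finProdFinEquiv, mul_mul_mul_comm]
  exact mul_le_mul (h i) (h' i') (mul_nonneg hb (hp' i')) ((mul_nonneg ha (hp i)).trans (h i))

namespace IsProbVec

variable {n : ℕ} {p q : Fin n → ℝ}

lemma kron {m : ℕ} {q : Fin m → ℝ} (hp : IsProbVec p) (hq : IsProbVec q) :
    IsProbVec (kron p q) :=
  ⟨fun i => mul_nonneg (hp.1 _) (hq.1 _), by rw [sum_kron, hp.2, hq.2, one_mul]⟩

lemma eq_of_le (hp : IsProbVec p) (hq : IsProbVec q) (h : ∀ i, p i ≤ q i) : p = q :=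
  funext fun i => (sum_eq_sum_iff_of_le fun i _ => h i).1 (hp.2.trans hq.2.symm) i (mem_univ i)

lemma sub_smul_div_one_sub {ν : ℝ} (hp : IsProbVec p) (hq : IsProbVec q) (hν : ν < 1)
    (h : ∀ i, ν * p i ≤ q i) : IsProbVec fun i => (q i - ν * p i) / (1 - ν) := by
  refine ⟨fun i => div_nonneg (sub_nonneg.2 (h i)) (sub_nonneg.2 hν.le), ?_⟩
  rw [← sum_div, sum_sub_distrib, ← mul_sum, hp.2, hq.2, mul_one, div_self (sub_ne_zero.2 hν.ne')]

end IsProbVec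

lemma isProbVec_pair {ν : ℝ} (h₀ : 0 ≤ ν) (h₁ : ν ≤ 1) : IsProbVec ![ν, 1 - ν] :=
  ⟨fun i => by fin_cases i <;> simp [h₀, h₁], by simp⟩

lemma isProbVec_e₁ : IsProbVec ![(1 : ℝ), 0] := by
  simpa using isProbVec_pair zero_le_one le_rfl

lemma isProbVec_single {n : ℕ} (a : Fin n) : IsProbVec (Pi.single a 1 : Fin n → ℝ) :=
  ⟨fun j => by by_cases h : j = a <;> simp [h], by simp⟩

lemma isStochastic_of_isProbVec_rows {n m : ℕ} {W : Matrix (Fin n) (Fin m) ℝ}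
    (hW : ∀ i, IsProbVec (W i)) : IsStochastic W :=
  ⟨fun i => (hW i).1, fun i => (hW i).2⟩

lemma relMaj_pair_of_smul_le {n : ℕ} {p q : Fin n → ℝ} {ν : ℝ}
    (hp : IsProbVec p) (hq : IsProbVec q) (hν : ν < 1) (h : ∀ i, ν * p i ≤ q i) :
    RelMaj ![1, 0] ![ν, 1 - ν] p q := by
  have hν' : 1 - ν ≠ 0 := sub_ne_zero.2 hν.ne'
  refine ⟨of ![p, fun i => (q i - ν * p i) / (1 - ν)], isStochastic_of_isProbVec_rows ?_, ?_, ?_⟩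
  · intro i
    fin_cases i
    exacts [hp, hp.sub_smul_div_one_sub hq hν h]
  · simp
  · ext i
    simp [mul_div_cancel₀ _ hν']

lemma relMaj_coarsen {n : ℕ} {p q : Fin n → ℝ} (hp : IsProbVec p) (hq : IsProbVec q)
    (i₀ : Fin n) : RelMaj p q ![p i₀, 1 - p i₀] ![q i₀, 1 - q i₀] := by
  refine ⟨of fun i => ![(Pi.single i₀ 1 : Fin n → ℝ) i, 1 - (Pi.single i₀ 1 : Fin n → ℝ) i],
    isStochastic_of_isProbVec_rows ?_, ?_, ?_⟩
  · intro i
    show IsProbVec ![_, _]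
    by_cases hi : i = i₀
    · simpa [hi] using isProbVec_e₁
    · simpa [hi] using isProbVec_pair le_rfl zero_le_one
  all_goals
    ext j
    fin_cases j
    all_goals simp [vecMul, dotProduct, Pi.single_apply, mul_sub, sum_sub_distrib, hp.2, hq.2]

lemma relMaj_kron_pair_of_smul_le {n : ℕ} {t q : Fin n → ℝ} {ν : ℝ} (p : Fin n → ℝ)
    (ht : IsProbVec t) (hq : IsProbVec q) (hν : ν < 1) (h : ∀ i, ν * t i ≤ q i) :
    RelMaj (kron p ![1, 0]) (kron t ![ν, 1 - ν]) p q := by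
  have hν' : 1 - ν ≠ 0 := sub_ne_zero.2 hν.ne'
  set w : Fin n → ℝ := fun i => (q i - ν * t i) / (1 - ν)
  let W : Matrix (Fin (n * 2)) (Fin n) ℝ := of fun r =>
    ![Pi.single (finProdFinEquiv.symm r).1 1, w] (finProdFinEquiv.symm r).2
  have hW : ∀ a b, W (finProdFinEquiv (a, b)) = ![Pi.single a 1, w] b := fun a b => by
    ext j
    simp only [W, of_apply, Equiv.symm_apply_apply]
  refine ⟨W, isStochastic_of_isProbVec_rows ?_, ?_, ?_⟩
  · intro r
    obtain ⟨⟨a, b⟩, rfl⟩ := finProdFinEquiv.surjective r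
    rw [hW]
    fin_cases b
    exacts [isProbVec_single a, ht.sub_smul_div_one_sub hq hν h]
  · ext j
    simp [vecMul_kron_apply, hW, Pi.single_apply]
  · ext j
    simp only [vecMul_kron_apply, hW, Fin.sum_univ_two]
    simp [Pi.single_apply, sum_add_distrib, ← sum_mul, ht.2, w, mul_div_cancel₀ _ hν']
    ring

lemma le_of_forall_nat_mul_le_mul_add {r c a : ℝ} (h : ∀ k : ℕ, k * r ≤ k * c + a) : r ≤ c := by
  by_contra! hcr
  obtain ⟨k, hk⟩ := exists_nat_gt (a / (r - c))
  have := h k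
  rw [div_lt_iff₀ (sub_pos.2 hcr)] at hk
  linarith

lemma ENNReal.le_ofReal_of_forall_nat_mul_le {d : ℝ≥0∞} {c a : ℝ} (hc : 0 ≤ c) (ha : 0 ≤ a)
    (h : ∀ k : ℕ, k * d ≤ ENNReal.ofReal (k * c + a)) : d ≤ ENNReal.ofReal c := by
  have hd : d ≠ ⊤ := ne_top_of_le_ne_top ofReal_ne_top (by simpa using h 1)
  rw [← ENNReal.ofReal_toReal hd]
  refine ENNReal.ofReal_le_ofReal (le_of_forall_nat_mul_le_mul_add (a := a) fun k => ?_)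
  have := ENNReal.toReal_mono ofReal_ne_top (h k)
  rwa [ENNReal.toReal_mul, ENNReal.toReal_natCast,
    ENNReal.toReal_ofReal (by positivity)] at this

lemma half_pow_le_pow {ν : ℝ} (hν : 0 < ν) {k j : ℕ} (h : k * Real.logb 2 ν⁻¹ ≤ j) :
    (1 / 2 : ℝ) ^ j ≤ ν ^ k := by
  rw [← Real.logb_le_logb (b := 2) one_lt_two (by positivity) (by positivity),
    Real.logb_pow, Real.logb_pow, one_div, Real.logb_inv, Real.logb_self_eq_one one_lt_two]
  rw [Real.logb_inv] at h
  linarith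

noncomputable def bernoulliDiv (D : (n : ℕ) → (Fin n → ℝ) → (Fin n → ℝ) → ℝ≥0∞) (ν : ℝ) :
    ℝ≥0∞ :=
  D 2 ![1, 0] ![ν, 1 - ν]

namespace IsRelativeEntropy

variable {D : (n : ℕ) → (Fin n → ℝ) → (Fin n → ℝ) → ℝ≥0∞}

lemma bernoulliDiv_mul (hD : IsRelativeEntropy D) {ν₁ ν₂ : ℝ} (h₁ : 0 ≤ ν₁) (h₁' : ν₁ ≤ 1)
    (h₂ : 0 ≤ ν₂) (h₂' : ν₂ ≤ 1) (hlt : ν₁ * ν₂ < 1) :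
    bernoulliDiv D (ν₁ * ν₂) = bernoulliDiv D ν₁ + bernoulliDiv D ν₂ := by
  have hb₁ := isProbVec_pair h₁ h₁'
  have hb₂ := isProbVec_pair h₂ h₂'
  have hE := isProbVec_e₁.kron isProbVec_e₁
  have hQ := hb₁.kron hb₂
  have hadd : D (2 * 2) (kron ![1, 0] ![1, 0]) (kron ![ν₁, 1 - ν₁] ![ν₂, 1 - ν₂]) =
      bernoulliDiv D ν₁ + bernoulliDiv D ν₂ :=
    hD.additive _ _ _ _ isProbVec_e₁ hb₁ isProbVec_e₁ hb₂
  have he₁ : ∀ {ν : ℝ}, ν ≤ 1 → ∀ i, ν * ![(1 : ℝ), 0] i ≤ ![ν, 1 - ν] i := fun hν i => by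
    fin_cases i <;> simp [hν]
  apply le_antisymm
  · have hcoarse := relMaj_coarsen hE hQ (finProdFinEquiv (0, 0))
    norm_num [kron_finProdFinEquiv] at hcoarse
    rw [← hadd]
    exact hD.dpi _ _ _ _ hE hQ isProbVec_e₁ (isProbVec_pair (mul_nonneg h₁ h₂) hlt.le) hcoarse
  · rw [← hadd]
    exact hD.dpi _ _ _ _ isProbVec_e₁ (isProbVec_pair (mul_nonneg h₁ h₂) hlt.le) hE hQ
      (relMaj_pair_of_smul_le hE hQ hlt (smul_kron_le_kron isProbVec_e₁.1 isProbVec_e₁.1 h₁ h₂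
        (he₁ h₁') (he₁ h₂')))

lemma bernoulliDiv_le_of_le (hD : IsRelativeEntropy D) {ν ν' : ℝ} (hν : 0 ≤ ν) (hνν' : ν ≤ ν')
    (hν' : ν' ≤ 1) (hν1 : ν < 1) : bernoulliDiv D ν' ≤ bernoulliDiv D ν := by
  have hb' := isProbVec_pair (hν.trans hνν') hν'
  refine hD.dpi _ _ _ _ isProbVec_e₁ (isProbVec_pair hν hν1.le) isProbVec_e₁ hb'
    (relMaj_pair_of_smul_le isProbVec_e₁ hb' hν1 fun i => ?_)
  fin_cases i <;> simp [hνν', hν']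

lemma bernoulliDiv_half (hD : IsRelativeEntropy D) : bernoulliDiv D (1 / 2) = 1 := by
  rw [bernoulliDiv, show (1 : ℝ) - 1 / 2 = 1 / 2 by norm_num, hD.normalized,
    Real.logb_self_eq_one one_lt_two, ENNReal.ofReal_one]

lemma bernoulliDiv_one (hD : IsRelativeEntropy D) : bernoulliDiv D 1 = 0 := by
  have h := hD.bernoulliDiv_mul (ν₂ := 1 / 2) zero_le_one le_rfl (by norm_num) (by norm_num)
    (by norm_num)
  rw [one_mul, hD.bernoulliDiv_half] at h
  exact (ENNReal.add_left_inj ENNReal.one_ne_top).1 (h.symm.trans (zero_add 1).symm)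

lemma bernoulliDiv_pow (hD : IsRelativeEntropy D) {ν : ℝ} (hν : 0 ≤ ν) (hν1 : ν ≤ 1) (k : ℕ) :
    bernoulliDiv D (ν ^ k) = k * bernoulliDiv D ν := by
  rcases hν1.eq_or_lt with rfl | hν1
  · simp [hD.bernoulliDiv_one]
  induction k with
  | zero => simp [hD.bernoulliDiv_one]
  | succ k ih =>
    rw [pow_succ, hD.bernoulliDiv_mul (pow_nonneg hν k) (pow_le_one₀ hν hν1.le) hν hν1.le
      (mul_lt_one_of_nonneg_of_lt_one_right (pow_le_one₀ hν hν1.le) hν hν1), ih]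
    push_cast
    ring

/-- `k · f ν = f (νᵏ) ≤ f (2^-(j+1)) = j + 1` for `j = ⌈k log ν⁻¹⌉`; divide by `k → ∞`. -/
lemma bernoulliDiv_le_logb_inv (hD : IsRelativeEntropy D) {ν : ℝ} (hν : 0 < ν) (hν1 : ν ≤ 1) :
    bernoulliDiv D ν ≤ ENNReal.ofReal (Real.logb 2 ν⁻¹) := by
  have hc : 0 ≤ Real.logb 2 ν⁻¹ := Real.logb_nonneg one_lt_two (one_le_inv_iff₀.2 ⟨hν, hν1⟩)
  refine ENNReal.le_ofReal_of_forall_nat_mul_le hc zero_le_two fun k => ?_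
  set j := ⌈k * Real.logb 2 ν⁻¹⌉₊
  have hj : (j : ℝ) < k * Real.logb 2 ν⁻¹ + 1 := Nat.ceil_lt_add_one (by positivity)
  have hhalf : (1 / 2 : ℝ) ^ (j + 1) < 1 := pow_lt_one₀ (by norm_num) (by norm_num) j.succ_ne_zero
  calc (k : ℝ≥0∞) * bernoulliDiv D ν
      = bernoulliDiv D (ν ^ k) := (hD.bernoulliDiv_pow hν.le hν1 k).symm
    _ ≤ bernoulliDiv D ((1 / 2) ^ (j + 1)) :=
        hD.bernoulliDiv_le_of_le (by positivity)
          ((pow_le_pow_of_le_one (by norm_num) (by norm_num) j.le_succ).trans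
            (half_pow_le_pow hν (Nat.le_ceil _)))
          (pow_le_one₀ hν.le hν1) hhalf
    _ = ((j + 1 : ℕ) : ℝ≥0∞) := by
        rw [hD.bernoulliDiv_pow (by norm_num) (by norm_num), hD.bernoulliDiv_half, mul_one]
    _ ≤ ENNReal.ofReal (k * Real.logb 2 ν⁻¹ + 2) := by
        rw [← ENNReal.ofReal_natCast]
        exact ENNReal.ofReal_le_ofReal (by push_cast; linarith)

lemma le_add_bernoulliDiv (hD : IsRelativeEntropy D) {n : ℕ} {p q t : Fin n → ℝ}
    (hp : IsProbVec p) (hq : IsProbVec q) (ht : IsProbVec t) {ν : ℝ} (hν : 0 ≤ ν) (hν1 : ν ≤ 1)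
    (h : ∀ i, ν * t i ≤ q i) : D n p q ≤ D n p t + bernoulliDiv D ν := by
  rcases hν1.eq_or_lt with rfl | hν1
  · rw [ht.eq_of_le hq (by simpa using h)]
    exact le_self_add
  rw [bernoulliDiv, ← hD.additive _ _ _ _ hp ht isProbVec_e₁ (isProbVec_pair hν hν1.le)]
  exact hD.dpi _ _ _ _ (hp.kron isProbVec_e₁) (ht.kron (isProbVec_pair hν hν1.le)) hp hq
    (relMaj_kron_pair_of_smul_le p ht hq hν1 h)

end IsRelativeEntropy

lemma le_toReal_iSup_div_mul {n : ℕ} {t q : Fin n → ℝ}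
    (hS : (⨆ i, ENNReal.ofReal (t i) / ENNReal.ofReal (q i)) ≠ ⊤) (ht : ∀ i, 0 ≤ t i)
    (hq : ∀ i, 0 ≤ q i) (i : Fin n) :
    t i ≤ (⨆ i, ENNReal.ofReal (t i) / ENNReal.ofReal (q i)).toReal * q i := by
  have h := le_iSup (fun i => ENNReal.ofReal (t i) / ENNReal.ofReal (q i)) i
  rw [ENNReal.div_le_iff_le_mul (.inr hS) (.inl ENNReal.ofReal_ne_top)] at h
  simpa [ENNReal.toReal_ofReal (ht i), ENNReal.toReal_ofReal (hq i)] using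
    ENNReal.toReal_mono (ENNReal.mul_ne_top hS ENNReal.ofReal_ne_top) h

/-- triangle inequality: `𝔻(p‖q) ≤ 𝔻(p‖t) + D_max(t‖q)`. -/
theorem stmt5 (D : (n : ℕ) → (Fin n → ℝ) → (Fin n → ℝ) → ℝ≥0∞)
    (hD : IsRelativeEntropy D) (n : ℕ) (p q t : Fin n → ℝ)
    (hp : IsProbVec p) (hq : IsProbVec q) (ht : IsProbVec t) :
    D n p q ≤ D n p t + DmaxR t q := by
  by_cases hS : (⨆ i, ENNReal.ofReal (t i) / ENNReal.ofReal (q i)) = ⊤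
  · simp [DmaxR, hS]
  set M := (⨆ i, ENNReal.ofReal (t i) / ENNReal.ofReal (q i)).toReal
  have htq : ∀ i, t i ≤ M * q i := le_toReal_iSup_div_mul hS ht.1 hq.1
  have hM : 1 ≤ M := by
    simpa [← mul_sum, ht.2, hq.2] using sum_le_sum fun i (_ : i ∈ univ) => htq i
  have hM₀ : 0 < M := zero_lt_one.trans_le hM
  calc D n p q ≤ D n p t + bernoulliDiv D M⁻¹ :=
        hD.le_add_bernoulliDiv hp hq ht (inv_nonneg.2 hM₀.le) (inv_le_one_of_one_le₀ hM)
          fun i => (inv_mul_le_iff₀ hM₀).2 (htq i)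
    _ ≤ D n p t + DmaxR t q := by
        rw [DmaxR, if_neg hS]
        gcongr
        simpa using hD.bernoulliDiv_le_logb_inv (inv_pos.2 hM₀) (inv_le_one_of_one_le₀ hM)
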